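/- arXiv:2306.06626 — 4 statements merged into one kernel-verified Lean document; each statement's English description precedes it below -/
import Mathlib

section
/- For any normalized finite dataset and every s > 0, the data separation function satisfies λ(s) ≤ 1. -/
/-!
Pointwise, Jensen's inequality for the convex function `‖·‖²` and the probability weights
`ρ_s(· | y)` gives `‖∑ᵢ ρ_s(xᵢ | y) xᵢ‖² ≤ ∑ᵢ ρ_s(xᵢ | y) ‖xᵢ‖²`, so
`λ(s) ≤ (1/(dn)) ∑ᵢ ‖xᵢ‖² ∑ⱼ Aᵢⱼ` with `Aᵢⱼ = E ρ_s(xᵢ | xⱼ + s⁻¹ z)`. The point `xⱼ + s⁻¹ z` has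
Lebesgue density proportional to `exp (-(s²/2) ‖y - xⱼ‖²)`, the same kernel as in the numerator of
`ρ_s(xᵢ | y)`; hence `Aᵢⱼ` is the integral of an expression symmetric in `i` and `j`, and
`∑ⱼ Aᵢⱼ = ∑ⱼ Aⱼᵢ = E ∑ⱼ ρ_s(xⱼ | xᵢ + s⁻¹ z) = 1`. The bound is then the normalization
`(1/(dn)) ∑ᵢ ‖xᵢ‖² = 1`.
-/

open MeasureTheory ProbabilityTheory Real

/-- Standard Gaussian measure `N(0, I_d)` on `ℝ^d`. -/
noncomputable def stdGaussian (d : ℕ) : Measure (EuclideanSpace ℝ (Fin d)) :=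
  (Measure.pi fun _ : Fin d => gaussianReal 0 1).map (EuclideanSpace.equiv (Fin d) ℝ).symm

/-- Softmax posterior weights `ρ_s(x_i | y)`. -/
noncomputable def rho (d n : ℕ) (s : ℝ) (x : Fin n → EuclideanSpace ℝ (Fin d))
    (i : Fin n) (y : EuclideanSpace ℝ (Fin d)) : ℝ :=
  Real.exp (-(s ^ 2 / 2) * ‖x i - y‖ ^ 2) / ∑ l, Real.exp (-(s ^ 2 / 2) * ‖x l - y‖ ^ 2)

/-- The data separation function `λ(s)`. -/
noncomputable def lamSep (d n : ℕ) (x : Fin n → EuclideanSpace ℝ (Fin d)) (s : ℝ) : ℝ :=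
  (1 / ((d : ℝ) * n)) *
    ∑ j, ∫ z, ‖∑ i, rho d n s x i (x j + s⁻¹ • z) • x i‖ ^ 2 ∂ stdGaussian d

open Module
open scoped RealInnerProductSpace

section GaussianDensity

variable {V : Type*} [NormedAddCommGroup V] [InnerProductSpace ℝ V] [FiniteDimensional ℝ V]
  [MeasurableSpace V] [BorelSpace V]

theorem charFun_map_stdGaussian_const_add_smul (a : V) (σ : ℝ) (t : V) :
    charFun ((stdGaussian V).map fun z => a + σ • z) t =
      Complex.exp (-(σ ^ 2 * ‖t‖ ^ 2 / 2)) * Complex.exp (⟪a, t⟫ * Complex.I) := by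
  rw [show (fun z : V => a + σ • z) = (a + ·) ∘ (σ • ·) from rfl,
    ← Measure.map_map (by fun_prop) (by fun_prop), charFun_map_const_add,
    charFun_map_smul, charFun_stdGaussian, norm_smul, Real.norm_eq_abs, Complex.ofReal_mul,
    mul_pow, ← Complex.ofReal_pow, sq_abs]
  push_cast
  ring_nf

theorem integral_cexp_neg_mul_sq_norm_sub_mul_cexp_inner {b : ℝ} (hb : 0 < b) (a t : V) :
    ∫ y : V, (rexp (-b * ‖y - a‖ ^ 2) : ℂ) * Complex.exp (⟪y, t⟫ * Complex.I) =
      Complex.exp (⟪a, t⟫ * Complex.I) *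
        ((π / b) ^ (finrank ℝ V / 2 : ℂ) * Complex.exp (-(‖t‖ ^ 2 / (4 * b)))) := by
  rw [← integral_add_right_eq_self _ a]
  have hpt : ∀ v : V, (rexp (-b * ‖v + a - a‖ ^ 2) : ℂ) * Complex.exp (⟪v + a, t⟫ * Complex.I) =
      Complex.exp (⟪a, t⟫ * Complex.I) *
        Complex.exp (-b * ‖v‖ ^ 2 + Complex.I * ⟪t, v⟫) := by
    intro v
    rw [add_sub_cancel_right, inner_add_left, real_inner_comm t v, Complex.ofReal_exp,
      ← Complex.exp_add, ← Complex.exp_add]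
    push_cast
    ring_nf
  simp_rw [hpt, integral_const_mul,
    GaussianFourier.integral_cexp_neg_mul_sq_norm_add (show 0 < (b : ℂ).re from hb), Complex.I_sq]
  ring_nf

theorem integrable_rexp_neg_mul_sq_norm_sub {b : ℝ} (hb : 0 < b) (a : V) :
    Integrable fun y : V => rexp (-b * ‖y - a‖ ^ 2) := by
  have := (GaussianFourier.integrable_cexp_neg_mul_sq_norm_add (V := V)
    (show 0 < (b : ℂ).re from hb) 0 0).norm.comp_sub_right a
  refine this.congr (ae_of_all _ fun y => ?_)
  simp [Complex.norm_exp, ← Complex.ofReal_pow]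

theorem map_stdGaussian_const_add_smul (a : V) {σ : ℝ} (hσ : σ ≠ 0) :
    (stdGaussian V).map (fun z => a + σ • z) = volume.withDensity fun y =>
      ENNReal.ofReal ((2 * π * σ ^ 2) ^ (-(finrank ℝ V : ℝ) / 2) *
        rexp (-‖y - a‖ ^ 2 / (2 * σ ^ 2))) := by
  set c : ℝ := (2 * π * σ ^ 2) ^ (-(finrank ℝ V : ℝ) / 2) with hc
  set b : ℝ := 1 / (2 * σ ^ 2) with hb
  have hb0 : 0 < b := by positivity
  have hexp : ∀ y : V, -‖y - a‖ ^ 2 / (2 * σ ^ 2) = -b * ‖y - a‖ ^ 2 := fun y => by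
    rw [hb]; ring
  simp_rw [hexp]
  have : IsProbabilityMeasure ((stdGaussian V).map (fun z => a + σ • z)) :=
    Measure.isProbabilityMeasure_map (by fun_prop)
  have : IsFiniteMeasure (volume.withDensity fun y : V =>
      ENNReal.ofReal (c * rexp (-b * ‖y - a‖ ^ 2))) :=
    isFiniteMeasure_withDensity_ofReal
      ((integrable_rexp_neg_mul_sq_norm_sub hb0 a).const_mul c).hasFiniteIntegral
  refine Measure.ext_of_charFun (funext fun t => ?_)
  rw [charFun_map_stdGaussian_const_add_smul, charFun_apply,
    integral_withDensity_eq_integral_toReal_smul (by fun_prop)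
      (ae_of_all _ fun _ => ENNReal.ofReal_lt_top)]
  simp_rw [ENNReal.toReal_ofReal (by positivity : 0 ≤ c * rexp _), Complex.real_smul,
    Complex.ofReal_mul, mul_assoc, integral_const_mul,
    integral_cexp_neg_mul_sq_norm_sub_mul_cexp_inner hb0]
  have hscale : (π / b : ℂ) = ((2 * π * σ ^ 2 : ℝ) : ℂ) := by
    rw [hb]; push_cast; field_simp
  have hnormalize : (c : ℂ) * (π / b : ℂ) ^ (finrank ℝ V / 2 : ℂ) = 1 := by
    rw [hscale, show (finrank ℝ V / 2 : ℂ) = ((finrank ℝ V / 2 : ℝ) : ℂ) by push_cast; rfl,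
      ← Complex.ofReal_cpow (by positivity), ← Complex.ofReal_mul, hc,
      ← Real.rpow_add (by positivity), neg_div, neg_add_cancel, Real.rpow_zero,
      Complex.ofReal_one]
  have hquad : -((‖t‖ : ℂ) ^ 2 / (4 * b)) = -(σ ^ 2 * ‖t‖ ^ 2 / 2) := by
    rw [hb]; push_cast; field_simp; ring
  rw [hquad]
  linear_combination (-(Complex.exp (-(σ ^ 2 * ‖t‖ ^ 2 / 2)) *
    Complex.exp (⟪a, t⟫ * Complex.I))) * hnormalize

theorem integral_comp_const_add_smul_stdGaussian (a : V) {σ : ℝ} (hσ : σ ≠ 0) (f : V → ℝ) :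
    ∫ z, f (a + σ • z) ∂stdGaussian V = ∫ y, (2 * π * σ ^ 2) ^ (-(finrank ℝ V : ℝ) / 2) *
        rexp (-‖y - a‖ ^ 2 / (2 * σ ^ 2)) * f y := by
  have hemb : MeasurableEmbedding fun z : V => a + σ • z :=
    ((Homeomorph.smulOfNeZero σ hσ).trans (Homeomorph.addLeft a)).measurableEmbedding
  rw [← hemb.integral_map, map_stdGaussian_const_add_smul a hσ,
    integral_withDensity_eq_integral_toReal_smul (by fun_prop)
      (ae_of_all _ fun _ => ENNReal.ofReal_lt_top)]
  simp_rw [ENNReal.toReal_ofReal (by positivity :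
    0 ≤ (2 * π * σ ^ 2) ^ (-(finrank ℝ V : ℝ) / 2) * rexp _), smul_eq_mul]

end GaussianDensity

theorem stdGaussian_eq_stdGaussian_euclideanSpace (d : ℕ) :
    _root_.stdGaussian d = ProbabilityTheory.stdGaussian (EuclideanSpace ℝ (Fin d)) := by
  rw [← map_pi_eq_stdGaussian]
  rfl

instance (d : ℕ) : IsProbabilityMeasure (_root_.stdGaussian d) := by
  rw [stdGaussian_eq_stdGaussian_euclideanSpace]
  infer_instance

section Softmax

variable {d n : ℕ} {s : ℝ} {x : Fin n → EuclideanSpace ℝ (Fin d)}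

theorem rho_nonneg (i : Fin n) (y : EuclideanSpace ℝ (Fin d)) : 0 ≤ rho d n s x i y :=
  div_nonneg (exp_pos _).le (Finset.sum_nonneg fun _ _ => (exp_pos _).le)

theorem rho_le_one (i : Fin n) (y : EuclideanSpace ℝ (Fin d)) : rho d n s x i y ≤ 1 :=
  div_le_one_of_le₀
    (Finset.single_le_sum (f := fun l => rexp (-(s ^ 2 / 2) * ‖x l - y‖ ^ 2))
      (fun _ _ => (exp_pos _).le) (Finset.mem_univ i))
    (Finset.sum_nonneg fun _ _ => (exp_pos _).le)

theorem sum_rho [NeZero n] (y : EuclideanSpace ℝ (Fin d)) : ∑ i, rho d n s x i y = 1 := by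
  unfold rho
  rw [← Finset.sum_div, div_self (Finset.sum_pos (fun _ _ => exp_pos _) Finset.univ_nonempty).ne']

theorem measurable_rho (i : Fin n) : Measurable (rho d n s x i) := by
  unfold rho
  fun_prop

theorem norm_sq_sum_rho_smul_le [NeZero n] (y : EuclideanSpace ℝ (Fin d)) :
    ‖∑ i, rho d n s x i y • x i‖ ^ 2 ≤ ∑ i, rho d n s x i y * ‖x i‖ ^ 2 :=
  (convexOn_univ_norm.pow (fun _ _ => norm_nonneg _) 2).map_sum_le
    (fun i _ => rho_nonneg i y) (sum_rho y) (fun _ _ => Set.mem_univ _)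

theorem integrable_rho_comp (i : Fin n) (a : EuclideanSpace ℝ (Fin d)) :
    Integrable (fun z => rho d n s x i (a + s⁻¹ • z)) (_root_.stdGaussian d) :=
  Integrable.of_bound ((measurable_rho i).comp (by fun_prop)).aestronglyMeasurable 1
    (ae_of_all _ fun z => by
      rw [Real.norm_of_nonneg (rho_nonneg i _)]
      exact rho_le_one i _)

theorem integral_rho_comm (hs : s ≠ 0) (i j : Fin n) :
    ∫ z, rho d n s x i (x j + s⁻¹ • z) ∂_root_.stdGaussian d =
      ∫ z, rho d n s x j (x i + s⁻¹ • z) ∂_root_.stdGaussian d := by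
  have hdensity : ∀ (a y : EuclideanSpace ℝ (Fin d)),
      rexp (-‖y - a‖ ^ 2 / (2 * s⁻¹ ^ 2)) = rexp (-(s ^ 2 / 2) * ‖a - y‖ ^ 2) := by
    intro a y
    rw [norm_sub_rev]
    field_simp
  simp_rw [stdGaussian_eq_stdGaussian_euclideanSpace, integral_comp_const_add_smul_stdGaussian _ (inv_ne_zero hs), hdensity]
  refine integral_congr_ae (ae_of_all _ fun y => ?_)
  simp only [rho]
  ring

theorem sum_integral_rho [NeZero n] (hs : s ≠ 0) (i : Fin n) :
    ∑ j, ∫ z, rho d n s x i (x j + s⁻¹ • z) ∂_root_.stdGaussian d = 1 := by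
  simp_rw [integral_rho_comm hs i]
  rw [← integral_finsetSum _ fun j _ => integrable_rho_comp j (x i)]
  simp [sum_rho]

theorem integral_norm_sq_sum_rho_smul_le [NeZero n] (a : EuclideanSpace ℝ (Fin d)) :
    ∫ z, ‖∑ i, rho d n s x i (a + s⁻¹ • z) • x i‖ ^ 2 ∂_root_.stdGaussian d ≤
      ∑ i, ‖x i‖ ^ 2 * ∫ z, rho d n s x i (a + s⁻¹ • z) ∂_root_.stdGaussian d := by
  simp_rw [← integral_const_mul]
  rw [← integral_finsetSum _ fun i _ => (integrable_rho_comp i a).const_mul _]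
  refine integral_mono_of_nonneg (ae_of_all _ fun _ => sq_nonneg _)
    (integrable_finsetSum _ fun i _ => (integrable_rho_comp i a).const_mul _)
    (ae_of_all _ fun z => ?_)
  simpa only [mul_comm] using norm_sq_sum_rho_smul_le (x := x) (a + s⁻¹ • z)

theorem sum_integral_norm_sq_sum_rho_smul_le [NeZero n] (hs : s ≠ 0) :
    ∑ j, ∫ z, ‖∑ i, rho d n s x i (x j + s⁻¹ • z) • x i‖ ^ 2 ∂_root_.stdGaussian d ≤
      ∑ i, ‖x i‖ ^ 2 :=
  calc _ ≤ ∑ j, ∑ i, ‖x i‖ ^ 2 * ∫ z, rho d n s x i (x j + s⁻¹ • z) ∂_root_.stdGaussian d :=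
        Finset.sum_le_sum fun j _ => integral_norm_sq_sum_rho_smul_le (x j)
    _ = ∑ i, ‖x i‖ ^ 2 := by
        rw [Finset.sum_comm]
        simp_rw [← Finset.mul_sum, sum_integral_rho hs, mul_one]

end Softmax

theorem lamSep_le_one_general (d n : ℕ) (hn : 1 ≤ n)
    (x : Fin n → EuclideanSpace ℝ (Fin d))
    (hvar : 1 / ((d : ℝ) * n) * ∑ i, ‖x i‖ ^ 2 = 1)
    (s : ℝ) (hs : 0 < s) :
    lamSep d n x s ≤ 1 := by
  have : NeZero n := ⟨by omega⟩
  calc lamSep d n x s ≤ 1 / ((d : ℝ) * n) * ∑ i, ‖x i‖ ^ 2 :=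
        mul_le_mul_of_nonneg_left (sum_integral_norm_sq_sum_rho_smul_le hs.ne') (by positivity)
    _ = 1 := hvar

/-- For any normalized finite dataset and every `s > 0`, the data separation function
satisfies `λ(s) ≤ 1`. -/
theorem lamSep_le_one (d n : ℕ) (hd : 1 ≤ d) (hn : 1 ≤ n)
    (x : Fin n → EuclideanSpace ℝ (Fin d))
    (hmean : (n : ℝ)⁻¹ • ∑ i, x i = 0)
    (hvar : 1 / ((d : ℝ) * n) * ∑ i, ‖x i‖ ^ 2 = 1)
    (s : ℝ) (hs : 0 < s) :
    lamSep d n x s ≤ 1 :=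
  lamSep_le_one_general d n hn x hvar s hs
end

section
/- For every b ∈ [0,4), the function r(t) = √(1 − b t + b t²) is well defined and strictly positive on [0,1], satisfies the boundary conditions r(0) = r(1) = 1, and solves the ODE r̈(t) = (b − b²/4) / r(t)³ for all t ∈ (0,1). -/
open Real Filter Topology

/-!
Since `r ^ 2 = q` for the quadratic `q(t) = a t² + b t + c`, differentiating twice gives
`r'² + r r'' = a` with `r' = q' / (2 r)`, hence `r'' = (a q - q'² / 4) / r³`, and
`a q - q'² / 4 = a c - b² / 4` is the constant (up to sign, a quarter of the discriminant).
For `q(t) = 1 - b t + b t²` this is `b - b² / 4`, and `q = 1 - b / 4 + b (t - 1/2)² > 0` when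
`0 ≤ b < 4`.
-/

section SqrtQuadratic

variable {a b c t : ℝ}

theorem hasDerivAt_sqrt_quadratic (ht : 0 < a * t ^ 2 + b * t + c) :
    HasDerivAt (fun x => √(a * x ^ 2 + b * x + c))
      ((2 * a * t + b) / (2 * √(a * t ^ 2 + b * t + c))) t := by
  have hq : HasDerivAt (fun x => a * x ^ 2 + b * x + c) (2 * a * t + b) t := by
    have := (((hasDerivAt_pow 2 t).const_mul a).fun_add
      ((hasDerivAt_id' t).const_mul b)).add_const c
    exact this.congr_deriv (by ring)
  exact hq.sqrt ht.ne'

theorem deriv_deriv_sqrt_quadratic (hq : ∀ᶠ x in 𝓝 t, 0 < a * x ^ 2 + b * x + c) :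
    deriv (deriv fun x => √(a * x ^ 2 + b * x + c)) t =
      (a * c - b ^ 2 / 4) / √(a * t ^ 2 + b * t + c) ^ 3 := by
  have hderiv : deriv (fun x => √(a * x ^ 2 + b * x + c)) =ᶠ[𝓝 t]
      fun x => (2 * a * x + b) / (2 * √(a * x ^ 2 + b * x + c)) :=
    hq.mono fun x hx => (hasDerivAt_sqrt_quadratic hx).deriv
  have ht := hq.self_of_nhds
  have hnum : HasDerivAt (fun x => 2 * a * x + b) (2 * a) t := by
    simpa using ((hasDerivAt_id t).const_mul (2 * a)).add_const b
  have hr : 0 < √(a * t ^ 2 + b * t + c) := sqrt_pos.mpr ht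
  rw [hderiv.deriv_eq, ((hnum.fun_div ((hasDerivAt_sqrt_quadratic ht).const_mul 2)
    (by positivity)).deriv)]
  have hr_sq : √(a * t ^ 2 + b * t + c) ^ 2 = a * t ^ 2 + b * t + c := sq_sqrt ht.le
  generalize √(a * t ^ 2 + b * t + c) = r at hr hr_sq ⊢
  field_simp
  linear_combination (16 * a) * hr_sq

end SqrtQuadratic

theorem one_sub_mul_add_mul_sq_pos {b : ℝ} (hb : b ∈ Set.Ico (0 : ℝ) 4) (t : ℝ) :
    0 < 1 - b * t + b * t ^ 2 := by
  nlinarith [mul_nonneg hb.1 (sq_nonneg (t - 1 / 2)), hb.2]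

/-- For every `b ∈ [0,4)`, the function `r(t) = √(1 − b t + b t²)` is well defined and
strictly positive on `[0,1]`, satisfies `r(0) = r(1) = 1`, and solves the ODE
`r̈(t) = (b − b²/4) / r(t)³` on `(0,1)`. -/
theorem sqrt_quadratic_solves_ode (b : ℝ) (hb : b ∈ Set.Ico (0 : ℝ) 4) :
    (∀ t ∈ Set.Icc (0 : ℝ) 1, 0 < 1 - b * t + b * t ^ 2) ∧
    (∀ t ∈ Set.Icc (0 : ℝ) 1, 0 < Real.sqrt (1 - b * t + b * t ^ 2)) ∧
    Real.sqrt (1 - b * 0 + b * 0 ^ 2) = 1 ∧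
    Real.sqrt (1 - b * 1 + b * 1 ^ 2) = 1 ∧
    ∀ t ∈ Set.Ioo (0 : ℝ) 1,
      deriv (deriv (fun u => Real.sqrt (1 - b * u + b * u ^ 2))) t =
        (b - b ^ 2 / 4) / (Real.sqrt (1 - b * t + b * t ^ 2)) ^ 3 := by
  have hq := one_sub_mul_add_mul_sq_pos hb
  refine ⟨fun t _ => hq t, fun t _ => sqrt_pos.mpr (hq t), by simp, by simp, fun t _ => ?_⟩
  have hform : ∀ u, 1 - b * u + b * u ^ 2 = b * u ^ 2 + (-b) * u + 1 := fun u => by ring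
  simp only [hform]
  rw [deriv_deriv_sqrt_quadratic (.of_forall fun u => hform u ▸ hq u)]
  ring
end

section
/- Let C > 0 and let r : [0,1] → (0,∞) be twice continuously differentiable with r̈(t) = C / r(t)³ for all t ∈ (0,1) and boundary conditions r(0) = r(1) = 1. Then there exists b ∈ (0,4) such that C = b − b²/4 and r(t) = √(1 − b t + b t²) for all t ∈ [0,1]. -/
open Real Set

/-!
Along a solution of `r̈ = C / r³` the energy `E = ṙ² + C / r²` is conserved, hence
`(r²)'' = 2 ṙ² + 2 r r̈ = 2 E` and `r²` is a quadratic polynomial with leading coefficient `E`.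
The boundary values `r(0)² = r(1)² = 1` force `r² = 1 - E t + E t²`. At the midpoint
`(r²)' = 0`, so `ṙ(1/2) = 0` and `E = C / r(1/2)² = C / (1 - E/4)`, i.e. `C = E - E²/4`;
positivity of `C` and of `r(1/2)²` gives `0 < E < 4`.
-/

theorem Convex.is_const_of_hasDerivAt_zero {f : ℝ → ℝ} {D : Set ℝ} (hD : Convex ℝ D)
    (hc : ContinuousOn f D) (h : ∀ x ∈ interior D, HasDerivAt f 0 x) :
    ∀ x ∈ D, ∀ y ∈ D, f x = f y := by
  have hdiff : DifferentiableOn ℝ f (interior D) := fun x hx =>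
    (h x hx).differentiableAt.differentiableWithinAt
  have hmono := monotoneOn_of_deriv_nonneg hD hc hdiff fun x hx => (h x hx).deriv.ge
  have hanti := antitoneOn_of_deriv_nonpos hD hc hdiff fun x hx => (h x hx).deriv.le
  intro x hx y hy
  rcases le_total x y with hxy | hxy
  · exact le_antisymm (hmono hx hy hxy) (hanti hx hy hxy)
  · exact le_antisymm (hanti hy hx hxy) (hmono hy hx hxy)

theorem exists_eq_of_hasDerivAt_zero_Ioo {f : ℝ → ℝ} {a b : ℝ}
    (h : ∀ t ∈ Ioo a b, HasDerivAt f 0 t) : ∃ c, ∀ t ∈ Ioo a b, f t = c :=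
  isOpen_Ioo.exists_is_const_of_deriv_eq_zero isPreconnected_Ioo
    (fun t ht => (h t ht).differentiableAt.differentiableWithinAt) fun t ht => (h t ht).deriv

theorem ContDiffOn.hasDerivAt_deriv_of_isOpen {f : ℝ → ℝ} {s : Set ℝ}
    (hf : ContDiffOn ℝ 2 f s) (hs : IsOpen s) {x : ℝ} (hx : x ∈ s) :
    HasDerivAt f (deriv f x) x ∧ HasDerivAt (deriv f) (deriv (deriv f) x) x :=
  ⟨(hf.differentiableOn two_ne_zero x hx |>.differentiableAt (hs.mem_nhds hx)).hasDerivAt,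
    ((hf.deriv_of_isOpen hs (by norm_num)).differentiableOn one_ne_zero x hx
      |>.differentiableAt (hs.mem_nhds hx)).hasDerivAt⟩

theorem exists_eq_quadratic_of_hasDerivAt_const {u u' : ℝ → ℝ} {a b c : ℝ}
    (hcont : ContinuousOn u (Icc a b)) (hu : ∀ t ∈ Ioo a b, HasDerivAt u (u' t) t)
    (hu' : ∀ t ∈ Ioo a b, HasDerivAt u' c t) :
    ∃ k, (∀ t ∈ Ioo a b, u' t = k + c * t) ∧
      ∀ t ∈ Icc a b, u t = u a + k * (t - a) + c / 2 * (t ^ 2 - a ^ 2) := by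
  obtain ⟨k, hk⟩ : ∃ k, ∀ t ∈ Ioo a b, u' t - c * t = k :=
    exists_eq_of_hasDerivAt_zero_Ioo fun t ht =>
      ((hu' t ht).fun_sub ((hasDerivAt_id t).const_mul c)).congr_deriv (by simp)
  replace hk : ∀ t ∈ Ioo a b, u' t = k + c * t := fun t ht => by linarith [hk t ht]
  have hq : ∀ t, HasDerivAt (fun s => k * s + c / 2 * s ^ 2) (k + c * t) t := fun t =>
    (((hasDerivAt_id t).const_mul k).fun_add ((hasDerivAt_pow 2 t).const_mul (c / 2))).congr_deriv
      (by simp only [Nat.cast_ofNat]; ring)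
  have hv := (convex_Icc a b).is_const_of_hasDerivAt_zero
    (hcont.sub (by fun_prop : Continuous fun s => k * s + c / 2 * s ^ 2).continuousOn)
    fun t ht => by
      rw [interior_Icc] at ht
      exact ((hu t ht).fun_sub (hq t)).congr_deriv (by rw [hk t ht, sub_self])
  refine ⟨k, hk, fun t ht => ?_⟩
  have := hv t ht a ⟨le_rfl, ht.1.trans ht.2⟩
  simp only [Pi.sub_apply] at this
  linarith

section Energy

variable {r r' : ℝ → ℝ} {C : ℝ}

theorem hasDerivAt_energy {t : ℝ} (hr : HasDerivAt r (r' t) t)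
    (hr' : HasDerivAt r' (C / r t ^ 3) t) (h0 : r t ≠ 0) :
    HasDerivAt (fun s => r' s ^ 2 + C / r s ^ 2) 0 t :=
  ((hr'.fun_pow 2).fun_add
    ((hasDerivAt_const t C).fun_div (hr.fun_pow 2) (pow_ne_zero 2 h0))).congr_deriv
    (by field_simp; ring)

theorem hasDerivAt_two_mul_mul_deriv {t : ℝ} (hr : HasDerivAt r (r' t) t)
    (hr' : HasDerivAt r' (C / r t ^ 3) t) (h0 : r t ≠ 0) :
    HasDerivAt (fun s => 2 * r s * r' s) (2 * (r' t ^ 2 + C / r t ^ 2)) t :=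
  ((hr.const_mul 2).fun_mul hr').congr_deriv (by field_simp)

theorem exists_energy_const_and_sq_eq_quadratic {a b : ℝ} (hcont : ContinuousOn r (Icc a b))
    (hr : ∀ t ∈ Ioo a b, HasDerivAt r (r' t) t)
    (hr' : ∀ t ∈ Ioo a b, HasDerivAt r' (C / r t ^ 3) t) (h0 : ∀ t ∈ Ioo a b, r t ≠ 0) :
    ∃ E k, (∀ t ∈ Ioo a b, r' t ^ 2 + C / r t ^ 2 = E) ∧
      (∀ t ∈ Ioo a b, 2 * r t * r' t = k + 2 * E * t) ∧
      ∀ t ∈ Icc a b, r t ^ 2 = r a ^ 2 + k * (t - a) + E * (t ^ 2 - a ^ 2) := by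
  obtain ⟨E, hE⟩ := exists_eq_of_hasDerivAt_zero_Ioo fun t ht =>
    hasDerivAt_energy (hr t ht) (hr' t ht) (h0 t ht)
  obtain ⟨k, hk', hk⟩ := exists_eq_quadratic_of_hasDerivAt_const (u := fun t => r t ^ 2)
    (hcont.pow 2) (fun t ht => ((hr t ht).fun_pow 2).congr_deriv (by ring))
    (fun t ht => hE t ht ▸ hasDerivAt_two_mul_mul_deriv (hr t ht) (hr' t ht) (h0 t ht))
  exact ⟨E, k, hE, hk', fun t ht => by rw [hk t ht]; ring⟩

end Energy

/-- Let `C > 0` and let `r : [0,1] → (0,∞)` be twice continuously differentiable with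
`r̈(t) = C / r(t)³` on `(0,1)` and boundary conditions `r(0) = r(1) = 1`. Then there is
`b ∈ (0,4)` with `C = b − b²/4` and `r(t) = √(1 − b t + b t²)` on `[0,1]`. -/
theorem ode_solution_is_sqrt_quadratic (C : ℝ) (hC : 0 < C) (r : ℝ → ℝ)
    (hrpos : ∀ t ∈ Set.Icc (0 : ℝ) 1, 0 < r t)
    (hr_cont : ContinuousOn r (Set.Icc 0 1))
    (hr_smooth : ContDiffOn ℝ 2 r (Set.Ioo 0 1))
    (hode : ∀ t ∈ Set.Ioo (0 : ℝ) 1, deriv (deriv r) t = C / (r t) ^ 3)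
    (hr0 : r 0 = 1) (hr1 : r 1 = 1) :
    ∃ b ∈ Set.Ioo (0 : ℝ) 4, C = b - b ^ 2 / 4 ∧
      ∀ t ∈ Set.Icc (0 : ℝ) 1, r t = Real.sqrt (1 - b * t + b * t ^ 2) := by
  have hne : ∀ t ∈ Ioo (0 : ℝ) 1, r t ≠ 0 := fun t ht => (hrpos t (Ioo_subset_Icc_self ht)).ne'
  obtain ⟨E, k, hE, hk', hk⟩ := exists_energy_const_and_sq_eq_quadratic hr_cont
    (fun t ht => (hr_smooth.hasDerivAt_deriv_of_isOpen isOpen_Ioo ht).1)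
    (fun t ht => hode t ht ▸ (hr_smooth.hasDerivAt_deriv_of_isOpen isOpen_Ioo ht).2) hne
  have hkE : k = -E := by linarith [hr0 ▸ hr1 ▸ hk 1 (by norm_num)]
  have hsq : ∀ t ∈ Icc (0 : ℝ) 1, r t ^ 2 = 1 - E * t + E * t ^ 2 := fun t ht => by
    rw [hk t ht, hr0, hkE]; ring
  have hmid : (1 / 2 : ℝ) ∈ Ioo 0 1 := by norm_num
  have hmid' : (1 / 2 : ℝ) ∈ Icc 0 1 := Ioo_subset_Icc_self hmid
  have hderiv_mid : deriv r (1 / 2) = 0 := by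
    have : r (1 / 2) * deriv r (1 / 2) = 0 := by linarith [hk' _ hmid]
    exact (mul_eq_zero.mp this).resolve_left (hne _ hmid)
  have hρ : 0 < 1 - E / 4 := by
    have := pow_pos (hrpos _ hmid') 2
    rw [hsq _ hmid'] at this
    linarith
  have hCE : C = E * (1 - E / 4) := by
    have := hE _ hmid
    rw [hderiv_mid, zero_pow two_ne_zero, zero_add, div_eq_iff (pow_ne_zero 2 (hne _ hmid)),
      hsq _ hmid'] at this
    rw [this]
    ring
  refine ⟨E, ⟨by nlinarith, by linarith⟩, by rw [hCE]; ring, fun t ht => ?_⟩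
  rw [← hsq t ht, Real.sqrt_sq (hrpos t ht).le]
end

section
/- Let γ : [0, π/2] → ℝ be continuously differentiable, and let r, θ : [0,1] → ℝ be continuous on [0,1], twice continuously differentiable on (0,1), with r_t > 0, θ̇_t > 0, and γ(θ_t) > 0 for all t ∈ (0,1), boundary conditions r(0) = r(1) = 1, θ(0) = 0, θ(1) = π/2, and satisfying on (0,1) the Euler–Lagrange equations of the kinetic energy functional E(r,θ) = ∫₀¹ (ṙ_t² + r_t² θ̇_t² γ(θ_t)) dt, namely r̈_t = r_t θ̇_t² γ(θ_t) and 4 r_t ṙ_t θ̇_t γ(θ_t) + 2 r_t² θ̈_t γ(θ_t) + r_t² θ̇_t² γ'(θ_t) = 0. Then there exists b ∈ (0,4) such that for all t ∈ (0,1): r_t = √(1 − b t + b t²) and θ̇_t = (1/(1 − b t + b t²)) · √((b − b²/4) / γ(θ_t)). (Theorem 3.1 of the paper, characterizing kinetic optimal Gaussian paths in the polar coordinates a_t = r_t sin θ_t, m_t = r_t cos θ_t.) -/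
open Real Set

/-!
The Lagrangian `ṙ² + r² θ̇² γ(θ)` is purely kinetic and autonomous, so along a solution of the
Euler–Lagrange equations it is a conserved energy `b`. The radial equation then reads
`(r ṙ)˙ = ṙ² + r r̈ = b`, so `r²` has constant second derivative `2b`, and the boundary values
force `r² = 1 - b t + b t²`. Substituting `ṙ² = (r ṙ)² / r² = (b t - b/2)² / r²` into the energy
gives `r⁴ θ̇² γ(θ) = b - b²/4`; its positivity yields `0 < b < 4` and solving for `θ̇` gives the
angular speed.
-/

theorem ContDiffOn.differentiableAt_and_differentiableAt_deriv {f : ℝ → ℝ} {s : Set ℝ}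
    (hf : ContDiffOn ℝ 2 f s) (hs : IsOpen s) {t : ℝ} (ht : t ∈ s) :
    DifferentiableAt ℝ f t ∧ DifferentiableAt ℝ (deriv f) t :=
  ⟨(hf.differentiableOn two_ne_zero).differentiableAt (hs.mem_nhds ht),
    ((hf.deriv_of_isOpen hs (by norm_num : (1 : WithTop ℕ∞) + 1 ≤ 2)).differentiableOn
      one_ne_zero).differentiableAt (hs.mem_nhds ht)⟩

theorem mapsTo_Ioo_of_deriv_pos {f : ℝ → ℝ} {a b : ℝ} (hf : ContinuousOn f (Icc a b))
    (hf' : ∀ t ∈ Ioo a b, 0 < deriv f t) : MapsTo f (Ioo a b) (Ioo (f a) (f b)) :=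
  (strictMonoOn_of_deriv_pos (convex_Icc a b) hf (by rwa [interior_Icc])).mapsTo_Ioo

theorem exists_eq_const_of_hasDerivAt_zero {f : ℝ → ℝ} {a b : ℝ}
    (hf : ∀ t ∈ Ioo a b, HasDerivAt f 0 t) : ∃ c, ∀ t ∈ Ioo a b, f t = c :=
  isOpen_Ioo.exists_is_const_of_deriv_eq_zero isPreconnected_Ioo
    (fun t ht => (hf t ht).differentiableAt.differentiableWithinAt) fun t ht => (hf t ht).deriv

theorem exists_eq_quadratic_of_hasDerivAt {f g : ℝ → ℝ} {a b c : ℝ} (hab : a < b)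
    (hf_cont : ContinuousOn f (Icc a b)) (hf : ∀ t ∈ Ioo a b, HasDerivAt f (g t) t)
    (hg : ∀ t ∈ Ioo a b, HasDerivAt g (2 * c) t) :
    ∃ β α, (∀ t ∈ Ioo a b, g t = 2 * c * t + β) ∧
      ∀ t ∈ Icc a b, f t = c * t ^ 2 + β * t + α := by
  obtain ⟨β, hβ⟩ : ∃ β, ∀ t ∈ Ioo a b, g t - 2 * c * t = β :=
    exists_eq_const_of_hasDerivAt_zero fun t ht =>
      ((hg t ht).sub ((hasDerivAt_id' t).const_mul (2 * c))).congr_deriv (by ring)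
  have hg_eq : ∀ t ∈ Ioo a b, g t = 2 * c * t + β := fun t ht => by linarith [hβ t ht]
  obtain ⟨α, hα⟩ : ∃ α, ∀ t ∈ Ioo a b, f t - (c * t ^ 2 + β * t) = α :=
    exists_eq_const_of_hasDerivAt_zero fun t ht => by
      refine ((hf t ht).sub ((((hasDerivAt_id' t).pow 2).const_mul c).add
        ((hasDerivAt_id' t).const_mul β))).congr_deriv ?_
      rw [hg_eq t ht]
      ring
  refine ⟨β, α, hg_eq, ?_⟩
  have hIoo : EqOn f (fun t => c * t ^ 2 + β * t + α) (Ioo a b) := fun t ht => by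
    linarith [hα t ht]
  exact hIoo.of_subset_closure hf_cont (by fun_prop) Ioo_subset_Icc_self
    (closure_Ioo hab.ne).superset

theorem eq_one_sub_mul_add_mul_sq_of_hasDerivAt {f g : ℝ → ℝ} {c : ℝ}
    (hf_cont : ContinuousOn f (Icc 0 1)) (hf : ∀ t ∈ Ioo 0 1, HasDerivAt f (g t) t)
    (hg : ∀ t ∈ Ioo 0 1, HasDerivAt g (2 * c) t) (h0 : f 0 = 1) (h1 : f 1 = 1) :
    (∀ t ∈ Ioo 0 1, g t = 2 * c * t - c) ∧ ∀ t ∈ Icc 0 1, f t = 1 - c * t + c * t ^ 2 := by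
  obtain ⟨β, α, hg_eq, hf_eq⟩ := exists_eq_quadratic_of_hasDerivAt zero_lt_one hf_cont hf hg
  have hα : α = 1 := by simpa [h0] using (hf_eq 0 (left_mem_Icc.2 zero_le_one)).symm
  have hβ : β = -c := by
    have := hf_eq 1 (right_mem_Icc.2 zero_le_one)
    rw [h1, hα] at this
    linarith
  subst hα hβ
  exact ⟨fun t ht => by rw [hg_eq t ht]; ring, fun t ht => by rw [hf_eq t ht]; ring⟩

theorem eq_one_div_mul_sqrt_of_sq_mul_sq_mul_eq {x q G K : ℝ} (hx : 0 ≤ x) (hq : 0 < q)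
    (hG : 0 < G) (h : q ^ 2 * x ^ 2 * G = K) : x = 1 / q * √(K / G) := by
  rw [← h, mul_div_cancel_right₀ _ hG.ne', sqrt_mul (by positivity), sqrt_sq hq.le, sqrt_sq hx]
  field_simp

noncomputable def kineticLagrangian (γ r θ : ℝ → ℝ) (t : ℝ) : ℝ :=
  deriv r t ^ 2 + r t ^ 2 * deriv θ t ^ 2 * γ (θ t)

section EulerLagrange

variable {γ r θ : ℝ → ℝ} {t : ℝ}

theorem hasDerivAt_mul_deriv_of_eulerLagrange (hr : DifferentiableAt ℝ r t)
    (hr' : DifferentiableAt ℝ (deriv r) t)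
    (hEL_r : deriv (deriv r) t = r t * deriv θ t ^ 2 * γ (θ t)) :
    HasDerivAt (fun u => r u * deriv r u) (kineticLagrangian γ r θ t) t := by
  refine (hr.hasDerivAt.mul hr'.hasDerivAt).congr_deriv ?_
  rw [kineticLagrangian, hEL_r]
  ring

theorem hasDerivAt_kineticLagrangian_of_eulerLagrange (hr : DifferentiableAt ℝ r t)
    (hr' : DifferentiableAt ℝ (deriv r) t) (hθ : DifferentiableAt ℝ θ t)
    (hθ' : DifferentiableAt ℝ (deriv θ) t) (hγ : DifferentiableAt ℝ γ (θ t))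
    (hEL_r : deriv (deriv r) t = r t * deriv θ t ^ 2 * γ (θ t))
    (hEL_θ : 4 * r t * deriv r t * deriv θ t * γ (θ t) +
        2 * (r t) ^ 2 * deriv (deriv θ) t * γ (θ t) +
        (r t) ^ 2 * (deriv θ t) ^ 2 * deriv γ (θ t) = 0) :
    HasDerivAt (kineticLagrangian γ r θ) 0 t := by
  refine ((hr'.hasDerivAt.pow 2).add (((hr.hasDerivAt.pow 2).mul (hθ'.hasDerivAt.pow 2)).mul
    (hγ.hasDerivAt.comp t hθ.hasDerivAt))).congr_deriv ?_
  simp only [Pi.pow_apply, Pi.mul_apply, Function.comp_apply]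
  linear_combination 2 * deriv r t * hEL_r + deriv θ t * hEL_θ

end EulerLagrange

theorem sq_sq_mul_sq_mul_eq_of_energy {R R' Θ' G b t : ℝ} (hR : R ^ 2 = 1 - b * t + b * t ^ 2)
    (hRR' : 2 * (R * R') = 2 * b * t - b) (hE : R' ^ 2 + R ^ 2 * Θ' ^ 2 * G = b) :
    (R ^ 2) ^ 2 * Θ' ^ 2 * G = b - b ^ 2 / 4 := by
  linear_combination R ^ 2 * hE + b * hR - (2 * (R * R') + 2 * b * t - b) / 4 * hRR'

/-- Theorem 3.1: characterization of kinetic optimal Gaussian paths in polar coordinates.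
If `(r, θ)` satisfies the Euler–Lagrange equations of
`E(r,θ) = ∫₀¹ (ṙ_t² + r_t² θ̇_t² γ(θ_t)) dt` on `(0,1)` with `r > 0`, `θ̇ > 0`,
`γ(θ_t) > 0`, and boundary conditions `r(0) = r(1) = 1`, `θ(0) = 0`, `θ(1) = π/2`,
then there is `b ∈ (0,4)` such that `r_t = √(1 − b t + b t²)` and
`θ̇_t = (1/(1 − b t + b t²)) √((b − b²/4)/γ(θ_t))` on `(0,1)`. -/
theorem kinetic_optimal_path_characterization (γ : ℝ → ℝ)
    (hγ : ContDiffOn ℝ 1 γ (Set.Icc 0 (π / 2))) (r θ : ℝ → ℝ)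
    (hr_cont : ContinuousOn r (Set.Icc 0 1))
    (hθ_cont : ContinuousOn θ (Set.Icc 0 1))
    (hr_smooth : ContDiffOn ℝ 2 r (Set.Ioo 0 1))
    (hθ_smooth : ContDiffOn ℝ 2 θ (Set.Ioo 0 1))
    (hrpos : ∀ t ∈ Set.Ioo (0 : ℝ) 1, 0 < r t)
    (hθ'pos : ∀ t ∈ Set.Ioo (0 : ℝ) 1, 0 < deriv θ t)
    (hγpos : ∀ t ∈ Set.Ioo (0 : ℝ) 1, 0 < γ (θ t))
    (hr0 : r 0 = 1) (hr1 : r 1 = 1) (hθ0 : θ 0 = 0) (hθ1 : θ 1 = π / 2)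
    (hEL_r : ∀ t ∈ Set.Ioo (0 : ℝ) 1,
      deriv (deriv r) t = r t * (deriv θ t) ^ 2 * γ (θ t))
    (hEL_θ : ∀ t ∈ Set.Ioo (0 : ℝ) 1,
      4 * r t * deriv r t * deriv θ t * γ (θ t) +
        2 * (r t) ^ 2 * deriv (deriv θ) t * γ (θ t) +
        (r t) ^ 2 * (deriv θ t) ^ 2 * deriv γ (θ t) = 0) :
    ∃ b ∈ Set.Ioo (0 : ℝ) 4, ∀ t ∈ Set.Ioo (0 : ℝ) 1,
      r t = Real.sqrt (1 - b * t + b * t ^ 2) ∧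
      deriv θ t = (1 / (1 - b * t + b * t ^ 2)) *
        Real.sqrt ((b - b ^ 2 / 4) / γ (θ t)) := by
  have hr t (ht : t ∈ Ioo (0 : ℝ) 1) :=
    hr_smooth.differentiableAt_and_differentiableAt_deriv isOpen_Ioo ht
  have hθ t (ht : t ∈ Ioo (0 : ℝ) 1) :=
    hθ_smooth.differentiableAt_and_differentiableAt_deriv isOpen_Ioo ht
  have hγθ (t) (ht : t ∈ Ioo (0 : ℝ) 1) : DifferentiableAt ℝ γ (θ t) := by
    have hθt := mapsTo_Ioo_of_deriv_pos hθ_cont hθ'pos ht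
    rw [hθ0, hθ1] at hθt
    exact (hγ.differentiableOn one_ne_zero).differentiableAt (Icc_mem_nhds hθt.1 hθt.2)
  obtain ⟨b, hE⟩ := exists_eq_const_of_hasDerivAt_zero fun t ht =>
    hasDerivAt_kineticLagrangian_of_eulerLagrange (hr t ht).1 (hr t ht).2 (hθ t ht).1
      (hθ t ht).2 (hγθ t ht) (hEL_r t ht) (hEL_θ t ht)
  obtain ⟨hrr', hr_sq⟩ := eq_one_sub_mul_add_mul_sq_of_hasDerivAt (f := fun u => r u ^ 2)
    (c := b) (hr_cont.pow 2)
    (fun t ht => ((hr t ht).1.hasDerivAt.pow 2).congr_deriv (by ring))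
    (fun t ht => (((hasDerivAt_mul_deriv_of_eulerLagrange (hr t ht).1 (hr t ht).2
      (hEL_r t ht)).const_mul 2).congr_deriv (by rw [hE t ht])))
    (by simp [hr0]) (by simp [hr1])
  have hmoment t (ht : t ∈ Ioo (0 : ℝ) 1) :=
    sq_sq_mul_sq_mul_eq_of_energy (hr_sq t (Ioo_subset_Icc_self ht)) (hrr' t ht) (hE t ht)
  have hb : b ∈ Ioo 0 4 := by
    have hhalf : (1 / 2 : ℝ) ∈ Ioo 0 1 := by norm_num
    have hpos : 0 < b - b ^ 2 / 4 := by
      rw [← hmoment _ hhalf]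
      have := hrpos _ hhalf; have := hθ'pos _ hhalf; have := hγpos _ hhalf
      positivity
    constructor <;> nlinarith
  refine ⟨b, hb, fun t ht => ⟨?_, ?_⟩⟩
  · rw [← hr_sq t (Ioo_subset_Icc_self ht), sqrt_sq (hrpos t ht).le]
  · rw [← hr_sq t (Ioo_subset_Icc_self ht)]
    exact eq_one_div_mul_sqrt_of_sq_mul_sq_mul_eq (hθ'pos t ht).le (pow_pos (hrpos t ht) 2)
      (hγpos t ht) (hmoment t ht)
end
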